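/- Let U ⊆ ℝ² be open and let ψ and L be real-analytic functions on U satisfying ∂^{1,1}ψ = L·∂²_tψ on U. Then for every integer j ≥ 1, the identity ∂^{1,j}ψ = Σ_{r=2}^{j+1} C(j−1, r−2) (∂^{j+1−r}_t L)·∂^r_tψ holds on U. -/

import Mathlib

/-! Partial derivatives of a real-analytic function on an open set commute, so
∂^{1,j}ψ = ∂_t^{j-1} ∂^{1,1}ψ = ∂_t^{j-1} (L · ∂_t²ψ), and the Leibniz rule expands the last
expression into the stated sum. -/

open MeasureTheory Filter

/-- mixed partial derivative ∂^{k,ℓ}ψ = ∂^{k+ℓ}ψ/∂s^k∂t^ℓ. -/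
noncomputable def pd (ψ : ℝ → ℝ → ℝ) (k l : ℕ) (s t : ℝ) : ℝ :=
  iteratedDeriv k (fun s' => iteratedDeriv l (ψ s') t) s

open Finset Topology

section DirDeriv

variable {E F : Type*} [NormedAddCommGroup E] [NormedSpace ℝ E]
  [NormedAddCommGroup F] [NormedSpace ℝ F]

noncomputable def dirDeriv (v : E) (f : E → F) : E → F := fun x => fderiv ℝ f x v

variable {U : Set E} {f g : E → F}

theorem AnalyticOnNhd.dirDeriv [CompleteSpace F] (hf : AnalyticOnNhd ℝ f U) (v : E) :
    AnalyticOnNhd ℝ (_root_.dirDeriv v f) U := fun x hx =>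
  ((ContinuousLinearMap.apply ℝ F v).analyticAt _).comp (hf.fderiv x hx)

theorem AnalyticOnNhd.iterate_dirDeriv [CompleteSpace F] (hf : AnalyticOnNhd ℝ f U) (v : E) :
    ∀ n : ℕ, AnalyticOnNhd ℝ ((_root_.dirDeriv v)^[n] f) U
  | 0 => hf
  | n + 1 => by
    rw [Function.iterate_succ_apply']
    exact (hf.iterate_dirDeriv v n).dirDeriv v

theorem dirDeriv_congr_of_eqOn (hU : IsOpen U) (h : Set.EqOn f g U) (v : E) :
    Set.EqOn (dirDeriv v f) (dirDeriv v g) U := fun x hx => by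
  simp only [dirDeriv, (eventuallyEq_of_mem (hU.mem_nhds hx) h).fderiv_eq]

theorem dirDeriv_dirDeriv_eq_fderiv_fderiv {x : E} (hf : DifferentiableAt ℝ (fderiv ℝ f) x)
    (v w : E) : dirDeriv v (dirDeriv w f) x = fderiv ℝ (fderiv ℝ f) x v w := by
  have h := ((ContinuousLinearMap.apply ℝ F w).hasFDerivAt).comp x hf.hasFDerivAt
  change fderiv ℝ (ContinuousLinearMap.apply ℝ F w ∘ fderiv ℝ f) x v = _
  rw [h.fderiv]
  rfl

theorem dirDeriv_comm [CompleteSpace F] (hf : AnalyticOnNhd ℝ f U) {x : E} (hx : x ∈ U)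
    (v w : E) : dirDeriv v (dirDeriv w f) x = dirDeriv w (dirDeriv v f) x := by
  have hf' : DifferentiableAt ℝ (fderiv ℝ f) x := (hf.fderiv x hx).differentiableAt
  rw [dirDeriv_dirDeriv_eq_fderiv_fderiv hf', dirDeriv_dirDeriv_eq_fderiv_fderiv hf',
    ((hf x hx).contDiffAt (n := 2)).isSymmSndFDerivAt (by simp)]

theorem dirDeriv_iterate_comm [CompleteSpace F] (hU : IsOpen U) (hf : AnalyticOnNhd ℝ f U)
    (v w : E) :
    ∀ n : ℕ, Set.EqOn (dirDeriv v ((dirDeriv w)^[n] f)) ((dirDeriv w)^[n] (dirDeriv v f)) U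
  | 0 => fun _ _ => rfl
  | n + 1 => fun x hx => by
    rw [Function.iterate_succ_apply', Function.iterate_succ_apply',
      dirDeriv_comm (hf.iterate_dirDeriv w n) hx]
    exact dirDeriv_congr_of_eqOn hU (dirDeriv_iterate_comm hU hf v w n) w hx

end DirDeriv

section Plane

variable {U : Set (ℝ × ℝ)} {f : ℝ × ℝ → ℝ}

theorem DifferentiableAt.hasDerivAt_curry_right {s t : ℝ} (hf : DifferentiableAt ℝ f (s, t)) :
    HasDerivAt (fun t' => f (s, t')) (dirDeriv (0, 1) f (s, t)) t :=
  hf.hasFDerivAt.comp_hasDerivAt t ((hasDerivAt_const t s).prodMk (hasDerivAt_id t))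

theorem DifferentiableAt.hasDerivAt_curry_left {s t : ℝ} (hf : DifferentiableAt ℝ f (s, t)) :
    HasDerivAt (fun s' => f (s', t)) (dirDeriv (1, 0) f (s, t)) s :=
  hf.hasFDerivAt.comp_hasDerivAt s ((hasDerivAt_id s).prodMk (hasDerivAt_const s t))

theorem iteratedDeriv_curry_right_eq_iterate_dirDeriv (hU : IsOpen U)
    (hf : AnalyticOnNhd ℝ f U) :
    ∀ (n : ℕ) {s t : ℝ}, (s, t) ∈ U →
      iteratedDeriv n (fun t' => f (s, t')) t = (dirDeriv (0, 1))^[n] f (s, t)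
  | 0, _, _, _ => by simp
  | n + 1, s, t, h => by
    have hnear : (fun t' => iteratedDeriv n (fun t'' => f (s, t'')) t') =ᶠ[𝓝 t]
        fun t' => (dirDeriv (0, 1))^[n] f (s, t') := by
      filter_upwards [(Continuous.prodMk_right s).continuousAt.eventually_mem (hU.mem_nhds h)]
        with t' ht' using iteratedDeriv_curry_right_eq_iterate_dirDeriv hU hf n ht'
    rw [iteratedDeriv_succ, hnear.deriv_eq, Function.iterate_succ_apply']
    exact ((hf.iterate_dirDeriv (0, 1) n (s, t) h).differentiableAt.hasDerivAt_curry_right).deriv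

end Plane

@[simp]
theorem pd_zero (ψ : ℝ → ℝ → ℝ) (n : ℕ) (s t : ℝ) : pd ψ 0 n s t = iteratedDeriv n (ψ s) t :=
  congrFun iteratedDeriv_zero s

section MixedPartials

variable {U : Set (ℝ × ℝ)} {ψ : ℝ → ℝ → ℝ}

theorem pd_one_eq_dirDeriv (hU : IsOpen U) (hψ : AnalyticOnNhd ℝ (Function.uncurry ψ) U)
    (n : ℕ) {s t : ℝ} (h : (s, t) ∈ U) :
    pd ψ 1 n s t = dirDeriv (1, 0) ((dirDeriv (0, 1))^[n] (Function.uncurry ψ)) (s, t) := by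
  have hnear : (fun s' => iteratedDeriv n (ψ s') t) =ᶠ[𝓝 s]
      fun s' => (dirDeriv (0, 1))^[n] (Function.uncurry ψ) (s', t) := by
    filter_upwards [(Continuous.prodMk_left t).continuousAt.eventually_mem (hU.mem_nhds h)]
      with s' hs' using iteratedDeriv_curry_right_eq_iterate_dirDeriv hU hψ n hs'
  rw [pd, iteratedDeriv_one, hnear.deriv_eq]
  exact ((hψ.iterate_dirDeriv (0, 1) n (s, t) h).differentiableAt.hasDerivAt_curry_left).deriv

theorem pd_one_succ_eq_iteratedDeriv (hU : IsOpen U)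
    (hψ : AnalyticOnNhd ℝ (Function.uncurry ψ) U) (m : ℕ) {s t : ℝ} (h : (s, t) ∈ U) :
    pd ψ 1 (m + 1) s t = iteratedDeriv m (fun t' => pd ψ 1 1 s t') t := by
  have hψ' := hψ.dirDeriv (0, 1)
  rw [pd_one_eq_dirDeriv hU hψ (m + 1) h, Function.iterate_succ_apply,
    dirDeriv_iterate_comm hU hψ' _ _ m h,
    ← iteratedDeriv_curry_right_eq_iterate_dirDeriv hU (hψ'.dirDeriv (1, 0)) m h]
  refine EventuallyEq.iteratedDeriv_eq m ?_
  filter_upwards [(Continuous.prodMk_right s).continuousAt.eventually_mem (hU.mem_nhds h)]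
    with t' ht' using (pd_one_eq_dirDeriv hU hψ 1 ht').symm

end MixedPartials

theorem iteratedDeriv_mul_iteratedDeriv {𝕜 : Type*} [NontriviallyNormedField 𝕜]
    [CompleteSpace 𝕜] {f g : 𝕜 → 𝕜} {x : 𝕜} (hf : AnalyticAt 𝕜 f x) (hg : AnalyticAt 𝕜 g x)
    (m n : ℕ) :
    iteratedDeriv m (fun y => g y * iteratedDeriv n f y) x =
      ∑ i ∈ range (m + 1), (m.choose i : 𝕜) * iteratedDeriv (m - i) g x *
        iteratedDeriv (i + n) f x := by
  have hf' : AnalyticAt 𝕜 (iteratedDeriv n f) x := by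
    rw [iteratedDeriv_eq_iterate]; exact hf.iterated_deriv n
  rw [show (fun y => g y * iteratedDeriv n f y) = fun y => iteratedDeriv n f y * g y from
    funext fun y => mul_comm _ _, iteratedDeriv_fun_mul hf'.contDiffAt hg.contDiffAt]
  refine sum_congr rfl fun i _ => ?_
  simp only [iteratedDeriv_eq_iterate, ← Function.iterate_add_apply]
  ring

theorem sum_Icc_choose_sub_eq_sum_range {R : Type*} [CommSemiring R] (a b : ℕ → R) (m n : ℕ) :
    ∑ r ∈ Icc n (m + n), (m.choose (r - n) : R) * a (m + n - r) * b r =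
      ∑ i ∈ range (m + 1), (m.choose i : R) * a (m - i) * b (i + n) := by
  rw [← Ico_add_one_right_eq_Icc, sum_Ico_eq_sum_range, show m + n + 1 - n = m + 1 by omega]
  refine sum_congr rfl fun i _ => ?_
  rw [Nat.add_sub_cancel_left, show m + n - (n + i) = m - i by omega, add_comm n i]

/-- The useful identity: if ∂^{1,1}ψ = L·∂²_tψ on the open set U, then for every j ≥ 1,
∂^{1,j}ψ = Σ_{r=2}^{j+1} C(j−1, r−2) (∂^{j+1−r}_t L)·∂^r_tψ on U. -/
theorem stmt6 (U : Set (ℝ × ℝ)) (hU : IsOpen U)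
    (ψ L : ℝ → ℝ → ℝ)
    (hψ : ∀ p ∈ U, AnalyticAt ℝ (fun q : ℝ × ℝ => ψ q.1 q.2) p)
    (hL : ∀ p ∈ U, AnalyticAt ℝ (fun q : ℝ × ℝ => L q.1 q.2) p)
    (hfac : ∀ p ∈ U, pd ψ 1 1 p.1 p.2 = L p.1 p.2 * pd ψ 0 2 p.1 p.2) :
    ∀ j : ℕ, 1 ≤ j → ∀ p ∈ U,
      pd ψ 1 j p.1 p.2 =
        ∑ r ∈ Finset.Icc 2 (j + 1),
          (Nat.choose (j - 1) (r - 2) : ℝ) * pd L 0 (j + 1 - r) p.1 p.2 *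
            pd ψ 0 r p.1 p.2 := by
  intro j hj p hp
  obtain ⟨m, rfl⟩ : ∃ m, j = m + 1 := ⟨j - 1, by omega⟩
  have hfac_near : (fun t => pd ψ 1 1 p.1 t) =ᶠ[𝓝 p.2]
      fun t => L p.1 t * iteratedDeriv 2 (ψ p.1) t := by
    filter_upwards [(Continuous.prodMk_right p.1).continuousAt.eventually_mem (hU.mem_nhds hp)]
      with t ht
    rw [hfac _ ht, pd_zero]
  calc pd ψ 1 (m + 1) p.1 p.2
      = iteratedDeriv m (fun t => pd ψ 1 1 p.1 t) p.2 :=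
        pd_one_succ_eq_iteratedDeriv hU hψ m hp
    _ = iteratedDeriv m (fun t => L p.1 t * iteratedDeriv 2 (ψ p.1) t) p.2 :=
        hfac_near.iteratedDeriv_eq m
    _ = ∑ i ∈ range (m + 1), (m.choose i : ℝ) * iteratedDeriv (m - i) (L p.1) p.2 *
          iteratedDeriv (i + 2) (ψ p.1) p.2 :=
        iteratedDeriv_mul_iteratedDeriv (hψ p hp).curry_right (hL p hp).curry_right m 2
    _ = _ := by
        simp only [pd_zero, Nat.add_sub_cancel]
        exact (sum_Icc_choose_sub_eq_sum_range (fun k => iteratedDeriv k (L p.1) p.2)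
          (fun k => iteratedDeriv k (ψ p.1) p.2) m 2).symm
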